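/- Let n ≥ 2 and 1 ≤ k ≤ n be integers, let f be an admissible semitrough profile for (n,k), and let z(x) = √(f(x₁)² + |x̄|²). Then for every compact set K ⊂ ℝⁿ there exists υ ∈ (0,1] (depending on K, n, k and f) such that for all x, y ∈ K one has |z(x) - z(y)| ≤ (1 - υ)·|x - y|. -/

import Mathlib

open Filter Real

/-- `lk n k = ((n-k)/n)^(1/k)`. -/
noncomputable def lk (n k : ℕ) : ℝ := (((n : ℝ) - k) / n) ^ ((1 : ℝ) / k)

/-- An admissible semitrough profile for `(n, k)`. -/
def IsAdmissibleProfile (n k : ℕ) (f : ℝ → ℝ) : Prop :=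
  ContDiff ℝ 2 f ∧
  (∀ t : ℝ,
      (k : ℝ) * deriv (deriv f) t /
          (f t ^ (k - 1) * (1 - deriv f t ^ 2) ^ ((k : ℝ) / 2 + 1)) +
        ((n : ℝ) - k) / (f t ^ k * (1 - deriv f t ^ 2) ^ ((k : ℝ) / 2)) = n) ∧
  (∀ t : ℝ, 0 < deriv f t ∧ deriv f t < 1 ∧ 0 < deriv (deriv f) t) ∧
  Tendsto f atBot (nhds (lk n k)) ∧
  (∀ t : ℝ, max (lk n k) t < f t ∧ f t < Real.sqrt (1 + t ^ 2)) ∧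
  (∃ C > (0 : ℝ), ∃ T > (0 : ℝ), ∀ t > T,
      |f t - Real.sqrt (1 + t ^ 2)| < C * t ^ (-(n : ℝ) - 1))

/-- The semitrough height function `z(x) = √(f(x₁)² + |x̄|²)`. -/
noncomputable def zfun (n : ℕ) [NeZero n] (f : ℝ → ℝ) (x : EuclideanSpace ℝ (Fin n)) : ℝ :=
  Real.sqrt (f (x 0) ^ 2 + ∑ i ∈ Finset.univ.erase (0 : Fin n), x i ^ 2)

/-!
Write `z(x) = √(a² + p²)` with `a = f(x₁)` and `p = |x̄|`. Then
`z(x)² - z(y)² = (a + b)(a - b) + (p + q)(p - q) ≤ L(a + b)|x₁ - y₁| + (p + q)|x̄ - ȳ|`,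
where `L < 1` bounds `f'` on the relevant compact interval. By Cauchy–Schwarz the right-hand side
is at most `√(L²(a + b)² + (p + q)²) · |x - y|`, and on a compact set, where `f ≥ m > 0` and
`|x̄| ≤ R`, the ratio `(a + b)² / ((a + b)² + (p + q)²)` stays above `m² / (m² + R²)`, so this is
at most `θ √((a + b)² + (p + q)²) · |x - y| ≤ θ (z(x) + z(y)) |x - y|` with
`θ² = 1 - (1 - L²) m² / (m² + R²) < 1`.
-/

open Finset

lemma mul_add_mul_le_sqrt_mul_sqrt (a b c d : ℝ) :
    a * c + b * d ≤ √(a ^ 2 + b ^ 2) * √(c ^ 2 + d ^ 2) := by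
  simpa [Fin.sum_univ_two] using Real.sum_mul_le_sqrt_mul_sqrt univ ![a, b] ![c, d]

lemma sqrt_add_sq_add_sq_le (a b p q : ℝ) :
    √((a + b) ^ 2 + (p + q) ^ 2) ≤ √(a ^ 2 + p ^ 2) + √(b ^ 2 + q ^ 2) := by
  rw [Real.sqrt_le_left (by positivity)]
  nlinarith [mul_add_mul_le_sqrt_mul_sqrt a p b q, Real.sq_sqrt (by positivity : 0 ≤ a ^ 2 + p ^ 2),
    Real.sq_sqrt (by positivity : 0 ≤ b ^ 2 + q ^ 2)]

lemma mul_sq_add_sq_le {m R L s t : ℝ} (hm : 0 < m) (ht : 0 ≤ t) (hts : m * t ≤ R * s)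
    (hL : L ^ 2 ≤ 1) :
    (L * s) ^ 2 + t ^ 2 ≤ (1 - (1 - L ^ 2) * m ^ 2 / (m ^ 2 + R ^ 2)) * (s ^ 2 + t ^ 2) := by
  have hden : 0 < m ^ 2 + R ^ 2 := by positivity
  have hsq : m ^ 2 * t ^ 2 ≤ R ^ 2 * s ^ 2 := by
    rw [← mul_pow, ← mul_pow]; exact pow_le_pow_left₀ (by positivity) hts 2
  rw [sub_mul, div_mul_eq_mul_div, le_sub_iff_add_le, ← le_sub_iff_add_le', div_le_iff₀ hden]
  nlinarith [mul_le_mul_of_nonneg_left hsq (sub_nonneg.2 hL)]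

lemma sqrt_sq_add_sq_sub_le {a b p q d w L θ : ℝ} (ha : 0 < a) (hb : 0 < b) (hp : 0 ≤ p)
    (hq : 0 ≤ q) (hθ : 0 ≤ θ) (hab : |a - b| ≤ L * d) (hpq : |p - q| ≤ w)
    (hcone : (L * (a + b)) ^ 2 + (p + q) ^ 2 ≤ θ ^ 2 * ((a + b) ^ 2 + (p + q) ^ 2)) :
    √(a ^ 2 + p ^ 2) - √(b ^ 2 + q ^ 2) ≤ θ * √(d ^ 2 + w ^ 2) := by
  set A := √(a ^ 2 + p ^ 2)
  set B := √(b ^ 2 + q ^ 2)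
  set D := √(d ^ 2 + w ^ 2)
  have hAB : 0 < A + B := add_pos_of_pos_of_nonneg (Real.sqrt_pos.2 (by positivity)) (by positivity)
  have hdiff : A ^ 2 - B ^ 2 ≤ L * (a + b) * d + (p + q) * w := by
    rw [Real.sq_sqrt (by positivity), Real.sq_sqrt (by positivity)]
    nlinarith [mul_le_mul_of_nonneg_left (abs_le.1 hab).2 (by positivity : 0 ≤ a + b),
      mul_le_mul_of_nonneg_left (abs_le.1 hpq).2 (by positivity : 0 ≤ p + q)]
  have hcone' : √((L * (a + b)) ^ 2 + (p + q) ^ 2) ≤ θ * √((a + b) ^ 2 + (p + q) ^ 2) := by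
    rw [← Real.sqrt_sq hθ, ← Real.sqrt_mul (sq_nonneg θ)]
    exact Real.sqrt_le_sqrt hcone
  have : (A - B) * (A + B) ≤ θ * D * (A + B) :=
    calc (A - B) * (A + B) = A ^ 2 - B ^ 2 := by ring
      _ ≤ L * (a + b) * d + (p + q) * w := hdiff
      _ ≤ √((L * (a + b)) ^ 2 + (p + q) ^ 2) * D := mul_add_mul_le_sqrt_mul_sqrt ..
      _ ≤ θ * √((a + b) ^ 2 + (p + q) ^ 2) * D := by gcongr
      _ ≤ θ * D * (A + B) := by
        rw [mul_right_comm]; gcongr; exact sqrt_add_sq_add_sq_le a b p q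
  exact le_of_mul_le_mul_right this hAB

lemma abs_sqrt_sq_add_sq_sub_le {a b p q d w L m R : ℝ} (hm : 0 < m) (ha : m ≤ a) (hb : m ≤ b)
    (hp : 0 ≤ p) (hq : 0 ≤ q) (hpR : p ≤ R) (hqR : q ≤ R) (hL : L ^ 2 ≤ 1)
    (hab : |a - b| ≤ L * d) (hpq : |p - q| ≤ w) :
    |√(a ^ 2 + p ^ 2) - √(b ^ 2 + q ^ 2)| ≤
      √(1 - (1 - L ^ 2) * m ^ 2 / (m ^ 2 + R ^ 2)) * √(d ^ 2 + w ^ 2) := by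
  have hδ : 0 ≤ 1 - (1 - L ^ 2) * m ^ 2 / (m ^ 2 + R ^ 2) := by
    rw [sub_nonneg, div_le_one (by positivity)]
    nlinarith [sq_nonneg L, sq_nonneg R, sq_nonneg m]
  have hcone : ∀ s t, m ≤ s → m ≤ t →
      (L * (s + t)) ^ 2 + (p + q) ^ 2 ≤
        √(1 - (1 - L ^ 2) * m ^ 2 / (m ^ 2 + R ^ 2)) ^ 2 * ((s + t) ^ 2 + (p + q) ^ 2) := by
    intro s t hs ht
    rw [Real.sq_sqrt hδ]
    exact mul_sq_add_sq_le hm (by positivity) (by nlinarith) hL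
  rw [abs_sub_le_iff]
  constructor
  · exact sqrt_sq_add_sq_sub_le (hm.trans_le ha) (hm.trans_le hb) hp hq (Real.sqrt_nonneg _)
      hab hpq (hcone a b ha hb)
  · rw [abs_sub_comm] at hab hpq
    exact sqrt_sq_add_sq_sub_le (hm.trans_le hb) (hm.trans_le ha) hq hp (Real.sqrt_nonneg _)
      hab hpq (add_comm p q ▸ hcone b a hb ha)

section Euclidean

variable {n : ℕ} [NeZero n]

/-- `x̄ = (x₂, …, xₙ)`, realised as the vector of `ℝⁿ` whose coordinate `0` vanishes. -/
noncomputable def xbar (x : EuclideanSpace ℝ (Fin n)) : EuclideanSpace ℝ (Fin n) :=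
  x - EuclideanSpace.single 0 (x 0)

lemma xbar_sub (x y : EuclideanSpace ℝ (Fin n)) : xbar (x - y) = xbar x - xbar y := by
  rw [xbar, xbar, xbar, PiLp.sub_apply, EuclideanSpace.single, EuclideanSpace.single,
    EuclideanSpace.single, PiLp.single_sub]
  abel

lemma norm_sq_eq_sq_add_norm_xbar_sq (x : EuclideanSpace ℝ (Fin n)) :
    ‖x‖ ^ 2 = x 0 ^ 2 + ‖xbar x‖ ^ 2 := by
  have horth : inner ℝ (EuclideanSpace.single 0 (x 0)) (xbar x) = 0 := by
    simp [xbar, EuclideanSpace.inner_single_left]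
  have := norm_add_sq_eq_norm_sq_add_norm_sq_real horth
  rw [show EuclideanSpace.single 0 (x 0) + xbar x = x from add_sub_cancel _ _] at this
  simpa [sq] using this

lemma norm_eq_sqrt_sq_add_norm_xbar_sq (x : EuclideanSpace ℝ (Fin n)) :
    ‖x‖ = √(x 0 ^ 2 + ‖xbar x‖ ^ 2) := by
  rw [← norm_sq_eq_sq_add_norm_xbar_sq, Real.sqrt_sq (norm_nonneg x)]

lemma norm_xbar_le (x : EuclideanSpace ℝ (Fin n)) : ‖xbar x‖ ≤ ‖x‖ := by
  rw [norm_eq_sqrt_sq_add_norm_xbar_sq x]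
  exact Real.le_sqrt_of_sq_le (le_add_of_nonneg_left (sq_nonneg _))

lemma abs_apply_zero_le_norm (x : EuclideanSpace ℝ (Fin n)) : |x 0| ≤ ‖x‖ := by
  simpa using PiLp.norm_apply_le x 0

lemma zfun_eq (f : ℝ → ℝ) (x : EuclideanSpace ℝ (Fin n)) :
    zfun n f x = √(f (x 0) ^ 2 + ‖xbar x‖ ^ 2) := by
  have hsum : ∑ i ∈ univ.erase (0 : Fin n), x i ^ 2 = ‖x‖ ^ 2 - x 0 ^ 2 := by
    simp [sum_erase_eq_sub, EuclideanSpace.norm_sq_eq]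
  rw [zfun, hsum, norm_sq_eq_sq_add_norm_xbar_sq, add_sub_cancel_left]

end Euclidean

lemma exists_abs_sub_le_of_abs_deriv_lt_one {f : ℝ → ℝ} (hf : ContDiff ℝ 1 f) {a b : ℝ}
    (hab : a ≤ b) (hf' : ∀ t ∈ Set.Icc a b, |deriv f t| < 1) :
    ∃ L, 0 ≤ L ∧ L < 1 ∧ ∀ s ∈ Set.Icc a b, ∀ t ∈ Set.Icc a b, |f s - f t| ≤ L * |s - t| := by
  obtain ⟨t₁, ht₁, hmax⟩ := isCompact_Icc.exists_isMaxOn (Set.nonempty_Icc.2 hab)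
    (hf.continuous_deriv le_rfl).abs.continuousOn
  refine ⟨|deriv f t₁|, abs_nonneg _, hf' t₁ ht₁, fun s hs t ht => ?_⟩
  simpa using Convex.norm_image_sub_le_of_norm_deriv_le
    (fun z _ => (hf.differentiable one_ne_zero).differentiableAt) (fun z hz => hmax hz)
    (convex_Icc a b) ht hs

lemma lk_nonneg {n k : ℕ} (hkn : k ≤ n) : 0 ≤ lk n k :=
  Real.rpow_nonneg (div_nonneg (sub_nonneg.2 (by exact_mod_cast hkn)) n.cast_nonneg) _

namespace IsAdmissibleProfile

variable {n k : ℕ} {f : ℝ → ℝ}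

lemma pos (hf : IsAdmissibleProfile n k f) (hkn : k ≤ n) (t : ℝ) : 0 < f t :=
  ((lk_nonneg hkn).trans (le_max_left _ t)).trans_lt (hf.2.2.2.2.1 t).1

lemma abs_deriv_lt_one (hf : IsAdmissibleProfile n k f) (t : ℝ) : |deriv f t| < 1 :=
  abs_lt.2 ⟨by linarith [(hf.2.2.1 t).1], (hf.2.2.1 t).2.1⟩

end IsAdmissibleProfile

theorem semitrough_locally_uniformly_spacelike_general (n k : ℕ) [NeZero n]
    (hkn : k ≤ n)
    (f : ℝ → ℝ) (hf : IsAdmissibleProfile n k f) :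
    ∀ K : Set (EuclideanSpace ℝ (Fin n)), IsCompact K →
      ∃ υ : ℝ, υ ∈ Set.Ioc (0 : ℝ) 1 ∧
        ∀ x ∈ K, ∀ y ∈ K, |zfun n f x - zfun n f y| ≤ (1 - υ) * ‖x - y‖ := by
  intro K hK
  obtain ⟨R, hR, hKR⟩ := hK.isBounded.exists_pos_norm_le
  have hK₀ : ∀ x ∈ K, x 0 ∈ Set.Icc (-R) R := fun x hx =>
    abs_le.1 ((abs_apply_zero_le_norm x).trans (hKR x hx))
  have hRR : -R ≤ R := by linarith
  obtain ⟨t₀, -, hmin⟩ := isCompact_Icc.exists_isMinOn (Set.nonempty_Icc.2 hRR)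
    hf.1.continuous.continuousOn
  obtain ⟨L, hL0, hL1, hlip⟩ := exists_abs_sub_le_of_abs_deriv_lt_one
    (hf.1.of_le (by norm_num)) hRR fun t _ => hf.abs_deriv_lt_one t
  have hm := hf.pos hkn t₀
  set θ := √(1 - (1 - L ^ 2) * f t₀ ^ 2 / (f t₀ ^ 2 + R ^ 2))
  have hθ0 : 0 ≤ θ := Real.sqrt_nonneg _
  have hθ1 : θ < 1 := by
    rw [Real.sqrt_lt' one_pos, one_pow, sub_lt_self_iff]
    exact div_pos (mul_pos (by nlinarith) (pow_pos hm 2)) (by positivity)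
  refine ⟨1 - θ, ⟨by linarith, by linarith⟩, fun x hx y hy => ?_⟩
  rw [sub_sub_cancel, zfun_eq, zfun_eq, norm_eq_sqrt_sq_add_norm_xbar_sq (x - y), xbar_sub,
    PiLp.sub_apply, ← sq_abs (x 0 - y 0)]
  exact abs_sqrt_sq_add_sq_sub_le hm (hmin (hK₀ x hx)) (hmin (hK₀ y hy)) (norm_nonneg _)
    (norm_nonneg _) ((norm_xbar_le x).trans (hKR x hx)) ((norm_xbar_le y).trans (hKR y hy))
    (by nlinarith) (hlip _ (hK₀ x hx) _ (hK₀ y hy)) (abs_norm_sub_norm_le _ _)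

/-- On every compact set `K` the semitrough is uniformly strictly spacelike: there is
`υ ∈ (0, 1]` with `|z(x) - z(y)| ≤ (1 - υ)|x - y|` for all `x, y ∈ K`. -/
theorem semitrough_locally_uniformly_spacelike (n k : ℕ) [NeZero n]
    (hn : 2 ≤ n) (hk1 : 1 ≤ k) (hkn : k ≤ n)
    (f : ℝ → ℝ) (hf : IsAdmissibleProfile n k f) :
    ∀ K : Set (EuclideanSpace ℝ (Fin n)), IsCompact K →
      ∃ υ : ℝ, υ ∈ Set.Ioc (0 : ℝ) 1 ∧
        ∀ x ∈ K, ∀ y ∈ K, |zfun n f x - zfun n f y| ≤ (1 - υ) * ‖x - y‖ :=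
  semitrough_locally_uniformly_spacelike_general n k hkn f hf
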